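/- The Racah algebra ℜ has no zero divisors: if u, v ∈ ℜ are nonzero, then uv ≠ 0. -/

import Mathlib

/-!
`ℜ` acts on the free module `V` over `P = F[δ, α, β]` with basis `e (i, j, k)`, standing for
`A^i D^j B^k`: `A` raises `i`, the central elements `δ, α, β` act as the variables of `P`, and
`D`, `B` act by the straightening rules read off from the defining relations. The same rules, by
induction on the weight `2i + 3j + 2k`, write every element of `ℜ` as a combination of the words
`A^i D^j B^k` with coefficients polynomials in `δ, α, β` (`δ` is central because it commutes with
`A, B, C`, hence with `D = [A, B] / 2`), so `u ↦ u • e 0` is injective. Ordering the basis by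
weight and then lexicographically, each of `A`, `D`, `B` moves the leading term `c • e m` of a
vector to `c • e (m + unit vector)`. Hence the leading coefficient of `(u * v) • e 0` is the
product of those of `u • e 0` and `v • e 0`, nonzero since `P` is a domain.
-/

noncomputable section

/-- Generators of the Racah algebra. -/
inductive RGen : Type
  | A | B | C | D

namespace Racah

variable (F : Type) [Field F]

/-- The free algebra on the generators `A`, `B`, `C`, `D`. -/
abbrev FA := FreeAlgebra F RGen

def fA : FA F := FreeAlgebra.ι F RGen.A
def fB : FA F := FreeAlgebra.ι F RGen.B
def fC : FA F := FreeAlgebra.ι F RGen.C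
def fD : FA F := FreeAlgebra.ι F RGen.D

/-- α = [A,D] + AC − BA in the free algebra. -/
def fAl : FA F := (fA F * fD F - fD F * fA F) + fA F * fC F - fB F * fA F
/-- β = [B,D] + BA − CB in the free algebra. -/
def fBe : FA F := (fB F * fD F - fD F * fB F) + fB F * fA F - fC F * fB F
/-- γ = [C,D] + CB − AC in the free algebra. -/
def fGa : FA F := (fC F * fD F - fD F * fC F) + fC F * fB F - fA F * fC F

/-- The defining relations of the Racah algebra:
`[A,B] = [B,C] = [C,A] = 2D` and each of `α`, `β`, `γ` commutes with each of `A`, `B`, `C`, `D`. -/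
inductive Rel : FA F → FA F → Prop
  | AB : Rel (fA F * fB F - fB F * fA F) (2 * fD F)
  | BC : Rel (fB F * fC F - fC F * fB F) (2 * fD F)
  | CA : Rel (fC F * fA F - fA F * fC F) (2 * fD F)
  | cen (c x : FA F) (hc : c = fAl F ∨ c = fBe F ∨ c = fGa F)
      (hx : x = fA F ∨ x = fB F ∨ x = fC F ∨ x = fD F) :
      Rel (c * x) (x * c)

/-- The Racah algebra ℜ. -/
abbrev R := RingQuot (Rel F)

def A : R F := RingQuot.mkAlgHom F (Rel F) (fA F)
def B : R F := RingQuot.mkAlgHom F (Rel F) (fB F)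
def C : R F := RingQuot.mkAlgHom F (Rel F) (fC F)
def D : R F := RingQuot.mkAlgHom F (Rel F) (fD F)

/-- α = [A,D] + AC − BA. -/
def al : R F := (A F * D F - D F * A F) + A F * C F - B F * A F
/-- β = [B,D] + BA − CB. -/
def be : R F := (B F * D F - D F * B F) + B F * A F - C F * B F
/-- γ = [C,D] + CB − AC. -/
def ga : R F := (C F * D F - D F * C F) + C F * B F - A F * C F
/-- δ = A + B + C. -/
def de : R F := A F + B F + C F

end Racah

open Finsupp

namespace Racah

variable (F : Type) [Field F]

/-! ### The module `V` and its weight filtration -/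

-- `e (i, j, k)` stands for `A^i D^j B^k`, and the variables `X 0, X 1, X 2` of `P` for `δ, α, β`.
abbrev Idx : Type := ℕ × ℕ × ℕ

abbrev P : Type := MvPolynomial (Fin 3) F

abbrev V : Type := Idx →₀ P F

def Xδ : P F := MvPolynomial.X 0
def Xα : P F := MvPolynomial.X 1
def Xβ : P F := MvPolynomial.X 2

def e (m : Idx) : V F := single m 1

-- Weights `2, 3, 2` for `A, D, B`: every straightening rule only produces terms of lower weight.
def wt (m : Idx) : ℕ := 2 * m.1 + 3 * m.2.1 + 2 * m.2.2

def restrictWt (W : ℕ) : Submodule (P F) (V F) := supported (P F) (P F) {m | wt m ≤ W}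

variable {F}

lemma mem_restrictWt {v : V F} {W : ℕ} : v ∈ restrictWt F W ↔ ∀ m ∈ v.support, wt m ≤ W := by
  simp [restrictWt, mem_supported, Set.subset_def]

lemma restrictWt_mono {W W' : ℕ} (h : W ≤ W') : restrictWt F W ≤ restrictWt F W' :=
  supported_mono fun _ hm => le_trans hm h

lemma mem_restrictWt_of_le {v : V F} {W W' : ℕ} (hv : v ∈ restrictWt F W) (h : W ≤ W') :
    v ∈ restrictWt F W' :=
  restrictWt_mono h hv

lemma e_mem_restrictWt {m : Idx} {W : ℕ} (h : wt m ≤ W) : e F m ∈ restrictWt F W :=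
  single_mem_supported _ _ h

lemma apply_eq_zero_of_mem_restrictWt {v : V F} {W : ℕ} (hv : v ∈ restrictWt F W) {m : Idx}
    (hm : W < wt m) : v m = 0 :=
  notMem_support_iff.1 fun h => (mem_restrictWt.1 hv m h).not_gt hm

lemma linearCombination_mem_restrictWt {G : Idx → V F} {c : ℕ}
    (hG : ∀ m, G m ∈ restrictWt F (wt m + c)) {v : V F} {W W' : ℕ} (hv : v ∈ restrictWt F W)
    (h : W + c ≤ W') : linearCombination (P F) G v ∈ restrictWt F W' := by
  rw [linearCombination_apply]
  refine Submodule.sum_mem _ fun m hm => Submodule.smul_mem _ _ ?_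
  exact restrictWt_mono (by have := mem_restrictWt.1 hv m hm; omega) (hG m)

variable (F)

/-! ### Relations in `ℜ` -/

lemma A_mul_B_sub : A F * B F - B F * A F = 2 * D F := by
  have h := RingQuot.mkAlgHom_rel F (Rel.AB (F := F))
  rwa [map_sub, map_mul, map_mul, map_mul, map_ofNat] at h

lemma B_mul_C_sub : B F * C F - C F * B F = 2 * D F := by
  have h := RingQuot.mkAlgHom_rel F (Rel.BC (F := F))
  rwa [map_sub, map_mul, map_mul, map_mul, map_ofNat] at h

lemma C_mul_A_sub : C F * A F - A F * C F = 2 * D F := by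
  have h := RingQuot.mkAlgHom_rel F (Rel.CA (F := F))
  rwa [map_sub, map_mul, map_mul, map_mul, map_ofNat] at h

lemma mem_center_of_commute {z : R F} (hA : Commute z (A F)) (hB : Commute z (B F))
    (hC : Commute z (C F)) (hD : Commute z (D F)) : z ∈ Subalgebra.center F (R F) := by
  refine Subalgebra.mem_center_iff.2 fun y => ?_
  obtain ⟨x, rfl⟩ := RingQuot.mkAlgHom_surjective F (Rel F) y
  induction x using FreeAlgebra.induction with
  | grade0 r => rw [AlgHom.commutes, Algebra.commutes]
  | grade1 g => cases g <;> [exact hA.eq.symm; exact hB.eq.symm; exact hC.eq.symm; exact hD.eq.symm]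
  | mul a b iha ihb => rw [map_mul, mul_assoc, ihb, ← mul_assoc, iha, mul_assoc]
  | add a b iha ihb => rw [map_add, add_mul, mul_add, iha, ihb]

lemma mem_center_of_rel {c : FA F} (hc : c = fAl F ∨ c = fBe F ∨ c = fGa F) :
    RingQuot.mkAlgHom F (Rel F) c ∈ Subalgebra.center F (R F) := by
  have h (x : FA F) (hx : x = fA F ∨ x = fB F ∨ x = fC F ∨ x = fD F) :
      Commute (RingQuot.mkAlgHom F (Rel F) c) (RingQuot.mkAlgHom F (Rel F) x) := by
    have h := RingQuot.mkAlgHom_rel F (Rel.cen c x hc hx)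
    rwa [map_mul, map_mul] at h
  exact mem_center_of_commute F (h _ (by simp)) (h _ (by simp)) (h _ (by simp)) (h _ (by simp))

lemma al_mem_center : al F ∈ Subalgebra.center F (R F) := by
  simpa [fAl, al, A, B, C, D] using mem_center_of_rel F (c := fAl F) (by simp)

lemma be_mem_center : be F ∈ Subalgebra.center F (R F) := by
  simpa [fBe, be, A, B, C, D] using mem_center_of_rel F (c := fBe F) (by simp)

variable {F} in
lemma de_mem_center (h2 : (2 : F) ≠ 0) : de F ∈ Subalgebra.center F (R F) := by
  have hA : Commute (de F) (A F) := by
    rw [commute_iff_eq, ← sub_eq_zero]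
    calc _ = (C F * A F - A F * C F) - (A F * B F - B F * A F) := by rw [de]; noncomm_ring
      _ = 0 := by rw [A_mul_B_sub, C_mul_A_sub, sub_self]
  have hB : Commute (de F) (B F) := by
    rw [commute_iff_eq, ← sub_eq_zero]
    calc _ = (A F * B F - B F * A F) - (B F * C F - C F * B F) := by rw [de]; noncomm_ring
      _ = 0 := by rw [A_mul_B_sub, B_mul_C_sub, sub_self]
  have hC : Commute (de F) (C F) := by
    rw [commute_iff_eq, ← sub_eq_zero]
    calc _ = (B F * C F - C F * B F) - (C F * A F - A F * C F) := by rw [de]; noncomm_ring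
      _ = 0 := by rw [B_mul_C_sub, C_mul_A_sub, sub_self]
  have hD : Commute (de F) (D F) := by
    have hD2 : D F = (2 : F)⁻¹ • (A F * B F - B F * A F) := by
      rw [A_mul_B_sub, two_mul, ← two_smul F, smul_smul, inv_mul_cancel₀ h2, one_smul]
    rw [hD2]
    exact ((hA.mul_right hB).sub_right (hB.mul_right hA)).smul_right _
  exact mem_center_of_commute F hA hB hC hD

lemma B_mul_A : B F * A F = A F * B F - 2 * D F := by
  rw [← A_mul_B_sub]; abel

lemma D_mul_A : D F * A F = A F * D F - al F + A F * C F - B F * A F := by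
  rw [al]; abel

lemma C_eq : C F = de F - A F - B F := by
  rw [de]; abel

lemma B_mul_D : B F * D F =
    D F * B F + be F + de F * B F - 2 * (A F * B F) + 2 * D F - B F * B F := by
  rw [be, de, B_mul_A]
  noncomm_ring

def evalCenter (h2 : (2 : F) ≠ 0) : P F →ₐ[F] R F :=
  (Subalgebra.center F (R F)).val.comp <| MvPolynomial.aeval
    ![⟨de F, de_mem_center h2⟩, ⟨al F, al_mem_center F⟩, ⟨be F, be_mem_center F⟩]

variable {F}

lemma commute_evalCenter (h2 : (2 : F) ≠ 0) (q : P F) (y : R F) :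
    Commute (evalCenter F h2 q) y := by
  refine (Subalgebra.mem_center_iff (R := F).1 ?_ y).symm
  simp only [evalCenter, AlgHom.comp_apply, Subalgebra.coe_val]
  exact SetLike.coe_mem _

lemma evalCenter_Xδ (h2 : (2 : F) ≠ 0) : evalCenter F h2 (Xδ F) = de F := by simp [evalCenter, Xδ]
lemma evalCenter_Xα (h2 : (2 : F) ≠ 0) : evalCenter F h2 (Xα F) = al F := by simp [evalCenter, Xα]
lemma evalCenter_Xβ (h2 : (2 : F) ≠ 0) : evalCenter F h2 (Xβ F) = be F := by simp [evalCenter, Xβ]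

variable (F)

/-! ### `ℜ` is spanned by the words `A^i D^j B^k` over `F[δ, α, β]` -/

def word (a : Idx) : R F := A F ^ a.1 * D F ^ a.2.1 * B F ^ a.2.2

lemma A_mul_word (i j k : ℕ) : A F * word F (i, j, k) = word F (i + 1, j, k) := by
  simp only [word, pow_succ', mul_assoc]

lemma D_mul_word_zero (j k : ℕ) : D F * word F (0, j, k) = word F (0, j + 1, k) := by
  simp only [word, pow_zero, one_mul, pow_succ', mul_assoc]

lemma B_mul_word_zero_zero (k : ℕ) : B F * word F (0, 0, k) = word F (0, 0, k + 1) := by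
  simp only [word, pow_zero, one_mul, pow_succ']

lemma word_zero : word F 0 = 1 := by simp [word]

variable {F}

/-- `v ↦ ∑ₐ (v a)(δ, α, β) * A^i D^j B^k`, summing over `a = (i, j, k)`. -/
def pbwSum (h2 : (2 : F) ≠ 0) : (Idx →₀ P F) →ₗ[F] R F :=
  lsum F fun a => (LinearMap.mulRight F (word F a)).comp (evalCenter F h2).toLinearMap

section Spanning

variable (h2 : (2 : F) ≠ 0)

lemma pbwSum_apply (v : Idx →₀ P F) :
    pbwSum h2 v = v.sum fun a q => evalCenter F h2 q * word F a := by
  rw [pbwSum, lsum_apply]; rfl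

lemma pbwSum_single (a : Idx) (q : P F) :
    pbwSum h2 (single a q) = evalCenter F h2 q * word F a := by
  simp [pbwSum]

lemma evalCenter_mul_pbwSum (q : P F) (v : Idx →₀ P F) :
    evalCenter F h2 q * pbwSum h2 v = pbwSum h2 (q • v) := by
  induction v using induction_linear with
  | zero => simp
  | add v w hv hw => rw [map_add, mul_add, hv, hw, smul_add, map_add]
  | single a q' => rw [pbwSum_single, smul_single, smul_eq_mul, pbwSum_single, map_mul, mul_assoc]

/-- The weight filtration of `ℜ`, in which the central `δ, α, β` have weight `0`. -/
def pbwFil (W : ℕ) : Submodule F (R F) := ((restrictWt F W).restrictScalars F).map (pbwSum h2)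

lemma mem_pbwFil_of_le {W W' : ℕ} {x : R F} (hx : x ∈ pbwFil h2 W) (h : W ≤ W') :
    x ∈ pbwFil h2 W' :=
  Submodule.map_mono (by exact restrictWt_mono h) hx

lemma word_mem_pbwFil {a : Idx} {W : ℕ} (h : wt a ≤ W) : word F a ∈ pbwFil h2 W :=
  ⟨single a 1, e_mem_restrictWt h, by rw [pbwSum_single, map_one, one_mul]⟩

lemma evalCenter_mul_mem_pbwFil (q : P F) {W : ℕ} {x : R F} (hx : x ∈ pbwFil h2 W) :
    evalCenter F h2 q * x ∈ pbwFil h2 W := by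
  obtain ⟨v, hv, rfl⟩ := hx
  exact ⟨q • v, Submodule.smul_mem _ q hv, (evalCenter_mul_pbwSum h2 q v).symm⟩

lemma mul_mem_pbwFil {g : R F} {t W : ℕ}
    (hg : ∀ a, wt a ≤ W → g * word F a ∈ pbwFil h2 (wt a + t)) {x : R F}
    (hx : x ∈ pbwFil h2 W) : g * x ∈ pbwFil h2 (W + t) := by
  obtain ⟨v, hv, rfl⟩ := hx
  rw [pbwSum_apply, Finsupp.sum, Finset.mul_sum]
  refine Submodule.sum_mem _ fun a ha => ?_
  have ha : wt a ≤ W := mem_restrictWt.1 hv a ha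
  rw [← mul_assoc, ← (commute_evalCenter h2 _ g).eq, mul_assoc]
  exact evalCenter_mul_mem_pbwFil h2 _ (mem_pbwFil_of_le h2 (hg a ha) (by omega))

lemma A_mul_mem_pbwFil {W : ℕ} {x : R F} (hx : x ∈ pbwFil h2 W) : A F * x ∈ pbwFil h2 (W + 2) :=
  mul_mem_pbwFil h2 (fun ⟨i, j, k⟩ _ => by
    rw [A_mul_word]; exact word_mem_pbwFil h2 (by simp only [wt]; omega)) hx

lemma two_mul_mem_pbwFil {W : ℕ} {x : R F} (hx : x ∈ pbwFil h2 W) : 2 * x ∈ pbwFil h2 W := by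
  rw [two_mul]; exact add_mem hx hx

lemma B_mul_word_mem (a : Idx)
    (ih : ∀ a', wt a' < wt a →
      D F * word F a' ∈ pbwFil h2 (wt a' + 3) ∧ B F * word F a' ∈ pbwFil h2 (wt a' + 2)) :
    B F * word F a ∈ pbwFil h2 (wt a + 2) := by
  have hD {W : ℕ} {x : R F} (hW : W < wt a) (hx : x ∈ pbwFil h2 W) :
      D F * x ∈ pbwFil h2 (W + 3) :=
    mul_mem_pbwFil h2 (fun a' ha' => (ih a' (by omega)).1) hx
  have hB {W : ℕ} {x : R F} (hW : W < wt a) (hx : x ∈ pbwFil h2 W) :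
      B F * x ∈ pbwFil h2 (W + 2) :=
    mul_mem_pbwFil h2 (fun a' ha' => (ih a' (by omega)).2) hx
  rcases a with ⟨_ | i, j, k⟩
  · rcases j with _ | j
    · rw [B_mul_word_zero_zero]
      exact word_mem_pbwFil h2 (by simp only [wt]; omega)
    have hBw := (ih (0, j, k) (by simp only [wt]; omega)).2
    have hDw : D F * word F (0, j, k) ∈ pbwFil h2 (wt (0, j, k) + 3) := by
      rw [D_mul_word_zero]; exact word_mem_pbwFil h2 (by simp only [wt]; omega)
    have hwt : wt (0, j + 1, k) + 2 = wt (0, j, k) + 5 := by simp only [wt]; omega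
    rw [hwt, ← D_mul_word_zero, ← mul_assoc, B_mul_D, ← evalCenter_Xβ h2, ← evalCenter_Xδ h2]
    simp only [add_mul, sub_mul, mul_assoc]
    refine sub_mem (add_mem (sub_mem (add_mem (add_mem ?_ ?_) ?_) ?_) ?_) ?_
    · exact hD (by simp only [wt]; omega) hBw
    · exact evalCenter_mul_mem_pbwFil h2 _ (word_mem_pbwFil h2 (by omega))
    · exact evalCenter_mul_mem_pbwFil h2 _ (mem_pbwFil_of_le h2 hBw (by omega))
    · exact mem_pbwFil_of_le h2 (two_mul_mem_pbwFil h2 (A_mul_mem_pbwFil h2 hBw)) (by omega)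
    · exact mem_pbwFil_of_le h2 (two_mul_mem_pbwFil h2 hDw) (by omega)
    · exact mem_pbwFil_of_le h2 (hB (by simp only [wt]; omega) hBw) (by omega)
  · obtain ⟨hDw, hBw⟩ := ih (i, j, k) (by simp only [wt]; omega)
    have hwt : wt (i + 1, j, k) + 2 = wt (i, j, k) + 4 := by simp only [wt]; omega
    rw [hwt, ← A_mul_word, ← mul_assoc, B_mul_A, sub_mul, mul_assoc, mul_assoc]
    exact sub_mem (A_mul_mem_pbwFil h2 hBw)
      (mem_pbwFil_of_le h2 (two_mul_mem_pbwFil h2 hDw) (by omega))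

lemma D_mul_word_mem (a : Idx)
    (ih : ∀ a', wt a' < wt a →
      D F * word F a' ∈ pbwFil h2 (wt a' + 3) ∧ B F * word F a' ∈ pbwFil h2 (wt a' + 2))
    (hBa : B F * word F a ∈ pbwFil h2 (wt a + 2)) :
    D F * word F a ∈ pbwFil h2 (wt a + 3) := by
  rcases a with ⟨_ | i, j, k⟩
  · rw [D_mul_word_zero]
    exact word_mem_pbwFil h2 (by simp only [wt]; omega)
  have hwt : wt (i + 1, j, k) = wt (i, j, k) + 2 := by simp only [wt]; omega
  obtain ⟨hDw, hBw⟩ := ih (i, j, k) (by omega)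
  have hw := word_mem_pbwFil h2 (le_refl (wt (i, j, k)))
  have hCw : C F * word F (i, j, k) ∈ pbwFil h2 (wt (i, j, k) + 2) := by
    rw [C_eq, sub_mul, sub_mul, ← evalCenter_Xδ h2]
    exact sub_mem (sub_mem (evalCenter_mul_mem_pbwFil h2 _ (mem_pbwFil_of_le h2 hw (by omega)))
      (A_mul_mem_pbwFil h2 hw)) hBw
  rw [hwt, ← A_mul_word] at hBa ⊢
  rw [← mul_assoc, D_mul_A, ← evalCenter_Xα h2]
  simp only [add_mul, sub_mul, mul_assoc]
  refine sub_mem (add_mem (sub_mem ?_ ?_) ?_) ?_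
  · exact A_mul_mem_pbwFil h2 hDw
  · exact evalCenter_mul_mem_pbwFil h2 _ (mem_pbwFil_of_le h2 hw (by omega))
  · exact mem_pbwFil_of_le h2 (A_mul_mem_pbwFil h2 hCw) (by omega)
  · exact mem_pbwFil_of_le h2 hBa (by omega)

lemma mul_word_mem (a : Idx) :
    D F * word F a ∈ pbwFil h2 (wt a + 3) ∧ B F * word F a ∈ pbwFil h2 (wt a + 2) := by
  induction h : wt a using Nat.strong_induction_on generalizing a with
  | _ n ih =>
    subst h
    have ih' := fun a' (ha' : wt a' < wt a) => ih _ ha' a' rfl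
    have hB := B_mul_word_mem h2 a ih'
    exact ⟨D_mul_word_mem h2 a ih' hB, hB⟩

lemma mem_range_pbwSum_iff {x : R F} :
    x ∈ LinearMap.range (pbwSum h2) ↔ ∃ W, x ∈ pbwFil h2 W := by
  refine ⟨?_, fun ⟨W, v, _, hv⟩ => ⟨v, hv⟩⟩
  rintro ⟨v, rfl⟩
  exact ⟨v.support.sup wt, v, mem_restrictWt.2 fun a ha => Finset.le_sup ha, rfl⟩

lemma gen_mul_mem_range_pbwSum (g : RGen) {x : R F} (hx : x ∈ LinearMap.range (pbwSum h2)) :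
    RingQuot.mkAlgHom F (Rel F) (FreeAlgebra.ι F g) * x ∈ LinearMap.range (pbwSum h2) := by
  obtain ⟨W, hW⟩ := (mem_range_pbwSum_iff h2).1 hx
  have hA : A F * x ∈ LinearMap.range (pbwSum h2) :=
    (mem_range_pbwSum_iff h2).2 ⟨_, A_mul_mem_pbwFil h2 hW⟩
  have hB : B F * x ∈ LinearMap.range (pbwSum h2) :=
    (mem_range_pbwSum_iff h2).2 ⟨_, mul_mem_pbwFil h2 (fun a _ => (mul_word_mem h2 a).2) hW⟩
  cases g
  · exact hA
  · exact hB
  · rw [show RingQuot.mkAlgHom F (Rel F) (FreeAlgebra.ι F RGen.C) = C F from rfl, C_eq,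
      sub_mul, sub_mul, ← evalCenter_Xδ h2]
    exact sub_mem (sub_mem ((mem_range_pbwSum_iff h2).2
      ⟨_, evalCenter_mul_mem_pbwFil h2 _ hW⟩) hA) hB
  · exact (mem_range_pbwSum_iff h2).2
      ⟨_, mul_mem_pbwFil h2 (fun a _ => (mul_word_mem h2 a).1) hW⟩

lemma pbwSum_surjective : Function.Surjective (pbwSum h2) := by
  intro u
  obtain ⟨x, rfl⟩ := RingQuot.mkAlgHom_surjective F (Rel F) u
  suffices ∀ y ∈ LinearMap.range (pbwSum h2),
      RingQuot.mkAlgHom F (Rel F) x * y ∈ LinearMap.range (pbwSum h2) by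
    simpa using this 1 ⟨single 0 1, by rw [pbwSum_single, map_one, one_mul, word_zero]⟩
  induction x using FreeAlgebra.induction with
  | grade0 r =>
    intro y hy
    rw [AlgHom.commutes, ← Algebra.smul_def]
    exact Submodule.smul_mem _ r hy
  | grade1 g => exact fun y => gen_mul_mem_range_pbwSum h2 g
  | mul a b iha ihb => intro y hy; rw [map_mul, mul_assoc]; exact iha _ (ihb y hy)
  | add a b iha ihb => intro y hy; rw [map_add, add_mul]; exact add_mem (iha y hy) (ihb y hy)

end Spanning

/-! ### The action of `ℜ` on `V` -/

variable (F)

def opA : V F →ₗ[P F] V F := linearCombination (P F) fun m => e F (m.1 + 1, m.2)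

lemma opA_e (i j k : ℕ) : opA F (e F (i, j, k)) = e F (i + 1, j, k) := by
  simp [opA, e]

variable {F} in
lemma opA_mem_restrictWt {v : V F} {W W' : ℕ} (hv : v ∈ restrictWt F W) (h : W + 2 ≤ W') :
    opA F v ∈ restrictWt F W' :=
  linearCombination_mem_restrictWt (fun m => e_mem_restrictWt (by simp only [wt]; omega)) hv h

/-- The images of `A^i D^j B^k` under left multiplication by `D` and by `B`, obtained by
moving the new letter past the leading one with `DA = AD - α + AC - BA`, `BA = AB - 2D`,
`BD = DB + β + δB - 2AB + 2D - B²` and `C = δ - A - B`. The last rule applies `D` and `B`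
to a vector of lower weight, so the recursion runs on fuel `n`, enough once `2 * wt m < n`. -/
def imgFuel : ℕ → Idx → V F × V F
  | 0, _ => (0, 0)
  | _ + 1, (0, 0, k) => (e F (0, 1, k), e F (0, 0, k + 1))
  | n + 1, (0, j + 1, k) =>
      (e F (0, j + 2, k),
        linearCombination (P F) (fun m => (imgFuel n m).1) (imgFuel n (0, j, k)).2
          + Xβ F • e F (0, j, k) + Xδ F • (imgFuel n (0, j, k)).2
          - (2 : P F) • opA F (imgFuel n (0, j, k)).2 + (2 : P F) • e F (0, j + 1, k)
          - linearCombination (P F) (fun m => (imgFuel n m).2) (imgFuel n (0, j, k)).2)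
  | n + 1, (i + 1, j, k) =>
      (opA F (imgFuel n (i, j, k)).1 - (2 : P F) • opA F (imgFuel n (i, j, k)).2
          + (2 : P F) • (imgFuel n (i, j, k)).1 - Xα F • e F (i, j, k)
          + Xδ F • e F (i + 1, j, k) - e F (i + 2, j, k),
        opA F (imgFuel n (i, j, k)).2 - (2 : P F) • (imgFuel n (i, j, k)).1)

lemma imgFuel_mem_restrictWt (n : ℕ) : ∀ m : Idx,
    (imgFuel F n m).1 ∈ restrictWt F (wt m + 3) ∧ (imgFuel F n m).2 ∈ restrictWt F (wt m + 2) := by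
  induction n with
  | zero => intro m; exact ⟨zero_mem _, zero_mem _⟩
  | succ n ih =>
    rintro ⟨_ | i, _ | j, k⟩
    · exact ⟨e_mem_restrictWt (by simp only [wt]; omega),
        e_mem_restrictWt (by simp only [wt]; omega)⟩
    · have hb := (ih (0, j, k)).2
      refine ⟨e_mem_restrictWt (by simp only [wt]; omega), ?_⟩
      refine sub_mem (add_mem (sub_mem (add_mem (add_mem ?_ ?_) ?_) ?_) ?_) ?_
      · exact linearCombination_mem_restrictWt (fun m => (ih m).1) hb (by simp only [wt]; omega)
      · exact Submodule.smul_mem _ _ (e_mem_restrictWt (by simp only [wt]; omega))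
      · exact Submodule.smul_mem _ _ (mem_restrictWt_of_le hb (by simp only [wt]; omega))
      · exact Submodule.smul_mem _ _ (opA_mem_restrictWt hb (by simp only [wt]; omega))
      · exact Submodule.smul_mem _ _ (e_mem_restrictWt (by simp only [wt]; omega))
      · exact linearCombination_mem_restrictWt (fun m => (ih m).2) hb (by simp only [wt]; omega)
    all_goals
      obtain ⟨hd, hb⟩ := ih (i, _, k)
      refine ⟨sub_mem (add_mem (sub_mem (add_mem (sub_mem ?_ ?_) ?_) ?_) ?_) ?_,
        sub_mem ?_ ?_⟩
      · exact opA_mem_restrictWt hd (by simp only [wt]; omega)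
      · exact Submodule.smul_mem _ _ (opA_mem_restrictWt hb (by simp only [wt]; omega))
      · exact Submodule.smul_mem _ _ (mem_restrictWt_of_le hd (by simp only [wt]; omega))
      · exact Submodule.smul_mem _ _ (e_mem_restrictWt (by simp only [wt]; omega))
      · exact Submodule.smul_mem _ _ (e_mem_restrictWt (by simp only [wt]; omega))
      · exact e_mem_restrictWt (by simp only [wt]; omega)
      · exact opA_mem_restrictWt hb (by simp only [wt]; omega)
      · exact Submodule.smul_mem _ _ (mem_restrictWt_of_le hd (by simp only [wt]; omega))

variable {F} in
lemma linearCombination_congr {G G' : Idx → V F} {v : V F} (h : ∀ m ∈ v.support, G m = G' m) :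
    linearCombination (P F) G v = linearCombination (P F) G' v := by
  simp only [linearCombination_apply]
  exact sum_congr fun m hm => by rw [h m hm]

lemma imgFuel_succ (n : ℕ) : ∀ m : Idx, 2 * wt m < n → imgFuel F (n + 1) m = imgFuel F n m := by
  induction n using Nat.strong_induction_on with
  | _ n ih =>
    rintro ⟨i, j, k⟩ h
    obtain ⟨n, rfl⟩ : ∃ n', n = n' + 1 := ⟨n - 1, by simp only [wt] at h; omega⟩
    rcases i with _ | i
    · rcases j with _ | j
      · rfl
      have hb : imgFuel F (n + 1) (0, j, k) = imgFuel F n (0, j, k) :=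
        ih n (by omega) _ (by simp only [wt] at h ⊢; omega)
      have hlow : ∀ m ∈ (imgFuel F n (0, j, k)).2.support,
          imgFuel F (n + 1) m = imgFuel F n m := fun m hm =>
        ih n (by omega) m (by
          have := mem_restrictWt.1 (imgFuel_mem_restrictWt F n (0, j, k)).2 m hm
          simp only [wt] at h this ⊢; omega)
      simp only [imgFuel, hb, linearCombination_congr fun m hm => congrArg Prod.fst (hlow m hm),
        linearCombination_congr fun m hm => congrArg Prod.snd (hlow m hm)]
    · have hp : imgFuel F (n + 1) (i, j, k) = imgFuel F n (i, j, k) :=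
        ih n (by omega) _ (by simp only [wt] at h ⊢; omega)
      simp only [imgFuel, hp]

def imgD (m : Idx) : V F := (imgFuel F (2 * wt m + 1) m).1

def imgB (m : Idx) : V F := (imgFuel F (2 * wt m + 1) m).2

def opD : V F →ₗ[P F] V F := linearCombination (P F) (imgD F)

def opB : V F →ₗ[P F] V F := linearCombination (P F) (imgB F)

lemma opD_e (m : Idx) : opD F (e F m) = imgD F m := by simp [opD, e]

lemma opB_e (m : Idx) : opB F (e F m) = imgB F m := by simp [opB, e]

lemma imgD_mem_restrictWt (m : Idx) : imgD F m ∈ restrictWt F (wt m + 3) :=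
  (imgFuel_mem_restrictWt F _ m).1

lemma imgB_mem_restrictWt (m : Idx) : imgB F m ∈ restrictWt F (wt m + 2) :=
  (imgFuel_mem_restrictWt F _ m).2

variable {F} in
lemma opD_mem_restrictWt {v : V F} {W W' : ℕ} (hv : v ∈ restrictWt F W) (h : W + 3 ≤ W') :
    opD F v ∈ restrictWt F W' :=
  linearCombination_mem_restrictWt (imgD_mem_restrictWt F) hv h

variable {F} in
lemma opB_mem_restrictWt {v : V F} {W W' : ℕ} (hv : v ∈ restrictWt F W) (h : W + 2 ≤ W') :
    opB F v ∈ restrictWt F W' :=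
  linearCombination_mem_restrictWt (imgB_mem_restrictWt F) hv h

lemma imgFuel_of_lt {m : Idx} {n : ℕ} (h : 2 * wt m < n) :
    imgFuel F n m = (imgD F m, imgB F m) := by
  induction n, h using Nat.le_induction with
  | base => rfl
  | succ n hn ih => rw [imgFuel_succ F n m hn, ih]

lemma linearCombination_imgFuel {v : V F} {W n : ℕ} (hv : v ∈ restrictWt F W) (h : 2 * W < n) :
    linearCombination (P F) (fun m => (imgFuel F n m).1) v = opD F v ∧
      linearCombination (P F) (fun m => (imgFuel F n m).2) v = opB F v := by
  have hm : ∀ m ∈ v.support, imgFuel F n m = (imgD F m, imgB F m) := fun m hm =>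
    imgFuel_of_lt F (by have := mem_restrictWt.1 hv m hm; omega)
  exact ⟨linearCombination_congr fun m h' => by rw [hm m h'],
    linearCombination_congr fun m h' => by rw [hm m h']⟩

lemma imgD_zero (j k : ℕ) : imgD F (0, j, k) = e F (0, j + 1, k) := by
  rcases j with _ | j <;> rfl

lemma imgB_zero_zero (k : ℕ) : imgB F (0, 0, k) = e F (0, 0, k + 1) := rfl

lemma imgD_succ (i j k : ℕ) : imgD F (i + 1, j, k) =
    opA F (imgD F (i, j, k)) - (2 : P F) • opA F (imgB F (i, j, k)) + (2 : P F) • imgD F (i, j, k)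
      - Xα F • e F (i, j, k) + Xδ F • e F (i + 1, j, k) - e F (i + 2, j, k) := by
  rw [imgD, imgFuel, imgFuel_of_lt F (by simp only [wt]; omega)]

lemma imgB_succ (i j k : ℕ) :
    imgB F (i + 1, j, k) = opA F (imgB F (i, j, k)) - (2 : P F) • imgD F (i, j, k) := by
  rw [imgB, imgFuel, imgFuel_of_lt F (by simp only [wt]; omega)]

lemma imgB_zero_succ (j k : ℕ) : imgB F (0, j + 1, k) =
    opD F (imgB F (0, j, k)) + Xβ F • e F (0, j, k) + Xδ F • imgB F (0, j, k)
      - (2 : P F) • opA F (imgB F (0, j, k)) + (2 : P F) • e F (0, j + 1, k)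
      - opB F (imgB F (0, j, k)) := by
  obtain ⟨hD, hB⟩ := linearCombination_imgFuel F (imgB_mem_restrictWt F (0, j, k))
    (n := 2 * wt (0, j + 1, k)) (by simp only [wt]; omega)
  rw [imgB, imgFuel, imgFuel_of_lt F (by simp only [wt]; omega)]
  simp only [hD, hB]

variable {F} in
lemma linearMap_ext_e {f g : V F →ₗ[P F] V F}
    (h : ∀ i j k, f (e F (i, j, k)) = g (e F (i, j, k))) : f = g :=
  lhom_ext' fun m => LinearMap.ext_ring (h m.1 m.2.1 m.2.2)

lemma opB_opA (v : V F) : opB F (opA F v) = opA F (opB F v) - (2 : P F) • opD F v := by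
  suffices h : opB F ∘ₗ opA F = opA F ∘ₗ opB F - (2 : P F) • opD F from LinearMap.congr_fun h v
  refine linearMap_ext_e fun i j k => ?_
  simp only [LinearMap.comp_apply, LinearMap.sub_apply, LinearMap.smul_apply, opA_e, opB_e,
    opD_e, imgB_succ]

lemma opD_opA (v : V F) : opD F (opA F v) = opA F (opD F v) - Xα F • v + Xδ F • opA F v
    - opA F (opA F v) - (2 : P F) • opA F (opB F v) + (2 : P F) • opD F v := by
  suffices h : opD F ∘ₗ opA F = opA F ∘ₗ opD F - Xα F • LinearMap.id + Xδ F • opA F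
      - opA F ∘ₗ opA F - (2 : P F) • (opA F ∘ₗ opB F) + (2 : P F) • opD F from
    LinearMap.congr_fun h v
  refine linearMap_ext_e fun i j k => ?_
  simp only [LinearMap.comp_apply, LinearMap.sub_apply, LinearMap.add_apply,
    LinearMap.smul_apply, LinearMap.id_apply, opA_e, opB_e, opD_e, imgD_succ]
  module

lemma opB_imgD (i j k : ℕ) : opB F (imgD F (i, j, k)) = opD F (imgB F (i, j, k))
    + Xβ F • e F (i, j, k) + Xδ F • imgB F (i, j, k) - (2 : P F) • opA F (imgB F (i, j, k))
    + (2 : P F) • imgD F (i, j, k) - opB F (imgB F (i, j, k)) := by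
  induction i with
  | zero => rw [imgD_zero, opB_e, imgB_zero_succ]
  | succ i ih =>
    rw [imgD_succ, imgB_succ]
    simp only [map_sub, map_add, map_smul, opB_opA, opD_opA, opB_e, opA_e, imgB_succ,
      imgD_succ, ih]
    module

lemma opB_opD (v : V F) : opB F (opD F v) = opD F (opB F v) + Xβ F • v + Xδ F • opB F v
    - (2 : P F) • opA F (opB F v) + (2 : P F) • opD F v - opB F (opB F v) := by
  suffices h : opB F ∘ₗ opD F = opD F ∘ₗ opB F + Xβ F • LinearMap.id + Xδ F • opB F
      - (2 : P F) • (opA F ∘ₗ opB F) + (2 : P F) • opD F - opB F ∘ₗ opB F from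
    LinearMap.congr_fun h v
  refine linearMap_ext_e fun i j k => ?_
  simp only [LinearMap.comp_apply, LinearMap.sub_apply, LinearMap.add_apply,
    LinearMap.smul_apply, LinearMap.id_apply, opB_e, opD_e]
  exact opB_imgD F i j k

def opC : Module.End (P F) (V F) := algebraMap (P F) _ (Xδ F) - opA F - opB F

lemma opC_apply (v : V F) : opC F v = Xδ F • v - opA F v - opB F v := rfl

lemma opA_mul_opB_sub : opA F * opB F - opB F * opA F = 2 * opD F := by
  refine LinearMap.ext fun v => ?_
  simp only [LinearMap.sub_apply, Module.End.mul_apply, two_mul, LinearMap.add_apply, opB_opA]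
  module

lemma opB_mul_opC_sub : opB F * opC F - opC F * opB F = 2 * opD F := by
  refine LinearMap.ext fun v => ?_
  simp only [LinearMap.sub_apply, Module.End.mul_apply, two_mul, LinearMap.add_apply, opC_apply,
    map_sub, map_smul, opB_opA]
  module

lemma opC_mul_opA_sub : opC F * opA F - opA F * opC F = 2 * opD F := by
  refine LinearMap.ext fun v => ?_
  simp only [LinearMap.sub_apply, Module.End.mul_apply, two_mul, LinearMap.add_apply, opC_apply,
    map_sub, map_smul, opB_opA]
  module

lemma alpha_ops_eq : opA F * opD F - opD F * opA F + opA F * opC F - opB F * opA F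
    = algebraMap (P F) _ (Xα F) := by
  refine LinearMap.ext fun v => ?_
  simp only [LinearMap.sub_apply, LinearMap.add_apply, Module.End.mul_apply,
    Module.algebraMap_end_apply, opC_apply, map_sub, map_smul, opD_opA, opB_opA]
  module

lemma beta_ops_eq : opB F * opD F - opD F * opB F + opB F * opA F - opC F * opB F
    = algebraMap (P F) _ (Xβ F) := by
  refine LinearMap.ext fun v => ?_
  simp only [LinearMap.sub_apply, LinearMap.add_apply, Module.End.mul_apply,
    Module.algebraMap_end_apply, opC_apply, opB_opD, opB_opA]
  module

lemma gamma_ops_eq : opC F * opD F - opD F * opC F + opC F * opB F - opA F * opC F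
    = algebraMap (P F) _ (-Xα F - Xβ F) := by
  refine LinearMap.ext fun v => ?_
  simp only [LinearMap.sub_apply, LinearMap.add_apply, Module.End.mul_apply,
    Module.algebraMap_end_apply, opC_apply, map_sub, map_smul, opB_opD, opD_opA]
  module

def repGen : RGen → Module.End (P F) (V F)
  | .A => opA F
  | .B => opB F
  | .C => opC F
  | .D => opD F

def repFree : FA F →ₐ[F] Module.End (P F) (V F) := FreeAlgebra.lift F (repGen F)

lemma repFree_rel ⦃x y : FA F⦄ (h : Rel F x y) : repFree F x = repFree F y := by
  have hι (g : RGen) : repFree F (FreeAlgebra.ι F g) = repGen F g := FreeAlgebra.lift_ι_apply _ _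
  cases h with
  | AB => simpa [fA, fB, fD, hι, repGen, map_ofNat] using opA_mul_opB_sub F
  | BC => simpa [fB, fC, fD, hι, repGen, map_ofNat] using opB_mul_opC_sub F
  | CA => simpa [fC, fA, fD, hι, repGen, map_ofNat] using opC_mul_opA_sub F
  | cen c x hc _ =>
    obtain ⟨p, hp⟩ : ∃ p, repFree F c = algebraMap (P F) _ p := by
      rcases hc with rfl | rfl | rfl
      · exact ⟨_, by simpa [fAl, fA, fB, fC, fD, hι, repGen] using alpha_ops_eq F⟩
      · exact ⟨_, by simpa [fBe, fA, fB, fC, fD, hι, repGen] using beta_ops_eq F⟩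
      · exact ⟨-Xα F - Xβ F, by simpa [fGa, fA, fB, fC, fD, hι, repGen] using gamma_ops_eq F⟩
    rw [map_mul, map_mul, hp, Algebra.commutes]

def rep : R F →ₐ[F] Module.End (P F) (V F) := RingQuot.liftAlgHom F ⟨repFree F, repFree_rel F⟩

lemma rep_mk (g : RGen) :
    rep F (RingQuot.mkAlgHom F (Rel F) (FreeAlgebra.ι F g)) = repGen F g := by
  rw [rep, RingQuot.liftAlgHom_mkAlgHom_apply, repFree, FreeAlgebra.lift_ι_apply]

lemma rep_A : rep F (A F) = opA F := rep_mk F .A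
lemma rep_B : rep F (B F) = opB F := rep_mk F .B
lemma rep_C : rep F (C F) = opC F := rep_mk F .C
lemma rep_D : rep F (D F) = opD F := rep_mk F .D

lemma rep_de : rep F (de F) = algebraMap (P F) _ (Xδ F) := by
  simp only [de, map_add, rep_A, rep_B, rep_C, opC]
  abel

lemma rep_al : rep F (al F) = algebraMap (P F) _ (Xα F) := by
  simpa [al, rep_A, rep_B, rep_C, rep_D] using alpha_ops_eq F

lemma rep_be : rep F (be F) = algebraMap (P F) _ (Xβ F) := by
  simpa [be, rep_A, rep_B, rep_C, rep_D] using beta_ops_eq F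

lemma rep_evalCenter (h2 : (2 : F) ≠ 0) (q : P F) :
    rep F (evalCenter F h2 q) = algebraMap (P F) _ q := by
  suffices h : (rep F).comp (evalCenter F h2) =
      IsScalarTower.toAlgHom F (P F) (Module.End (P F) (V F))
    from AlgHom.congr_fun h q
  refine MvPolynomial.algHom_ext fun i => ?_
  fin_cases i
  · exact (congrArg (rep F) (evalCenter_Xδ h2)).trans (rep_de F)
  · exact (congrArg (rep F) (evalCenter_Xα h2)).trans (rep_al F)
  · exact (congrArg (rep F) (evalCenter_Xβ h2)).trans (rep_be F)

lemma opA_pow_e (n i j k : ℕ) : (opA F ^ n) (e F (i, j, k)) = e F (i + n, j, k) := by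
  induction n with
  | zero => rfl
  | succ n ih => rw [pow_succ', Module.End.mul_apply, ih, opA_e, add_assoc]

lemma opD_pow_e (n j k : ℕ) : (opD F ^ n) (e F (0, j, k)) = e F (0, j + n, k) := by
  induction n with
  | zero => rfl
  | succ n ih => rw [pow_succ', Module.End.mul_apply, ih, opD_e, imgD_zero, add_assoc]

lemma opB_pow_e (n k : ℕ) : (opB F ^ n) (e F (0, 0, k)) = e F (0, 0, k + n) := by
  induction n with
  | zero => rfl
  | succ n ih => rw [pow_succ', Module.End.mul_apply, ih, opB_e, imgB_zero_zero, add_assoc]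

lemma rep_word (a : Idx) :
    rep F (word F a) = opA F ^ a.1 * opD F ^ a.2.1 * opB F ^ a.2.2 := by
  simp only [word, map_mul, map_pow, rep_A, rep_B, rep_D]

lemma rep_word_apply_e_zero (a : Idx) : rep F (word F a) (e F 0) = e F a := by
  obtain ⟨i, j, k⟩ := a
  rw [rep_word, Module.End.mul_apply, Module.End.mul_apply, show (0 : Idx) = (0, 0, 0) from rfl,
    opB_pow_e, opD_pow_e, opA_pow_e]
  simp only [zero_add]

lemma rep_pbwSum_apply_e_zero (h2 : (2 : F) ≠ 0) (v : Idx →₀ P F) :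
    rep F (pbwSum h2 v) (e F 0) = v := by
  induction v using induction_linear with
  | zero => simp
  | add v w hv hw => rw [map_add, map_add, LinearMap.add_apply, hv, hw]
  | single a q =>
    rw [pbwSum_single, map_mul, Module.End.mul_apply, rep_word_apply_e_zero, rep_evalCenter,
      Module.algebraMap_end_apply, e, smul_single, smul_eq_mul, mul_one]

/-! ### Leading terms -/

lemma imgD_sub_e_mem (i j k : ℕ) :
    imgD F (i, j, k) - e F (i, j + 1, k) ∈ restrictWt F (wt (i, j, k) + 2) := by
  induction i with
  | zero => rw [imgD_zero, sub_self]; exact zero_mem _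
  | succ i ih =>
    have h : imgD F (i + 1, j, k) - e F (i + 1, j + 1, k) =
        opA F (imgD F (i, j, k) - e F (i, j + 1, k)) - (2 : P F) • opA F (imgB F (i, j, k))
          + (2 : P F) • imgD F (i, j, k) - Xα F • e F (i, j, k) + Xδ F • e F (i + 1, j, k)
          - e F (i + 2, j, k) := by
      rw [imgD_succ, map_sub, opA_e]; abel
    rw [h]
    refine sub_mem (add_mem (sub_mem (add_mem (sub_mem ?_ ?_) ?_) ?_) ?_) ?_
    · exact opA_mem_restrictWt ih (by simp only [wt]; omega)
    · exact Submodule.smul_mem _ _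
        (opA_mem_restrictWt (imgB_mem_restrictWt F _) (by simp only [wt]; omega))
    · exact Submodule.smul_mem _ _
        (mem_restrictWt_of_le (imgD_mem_restrictWt F _) (by simp only [wt]; omega))
    · exact Submodule.smul_mem _ _ (e_mem_restrictWt (by simp only [wt]; omega))
    · exact Submodule.smul_mem _ _ (e_mem_restrictWt (by simp only [wt]; omega))
    · exact e_mem_restrictWt (by simp only [wt]; omega)

lemma imgB_sub_e_mem (i j k : ℕ) :
    imgB F (i, j, k) - e F (i, j, k + 1) ∈ restrictWt F (wt (i, j, k) + 1) := by
  induction i with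
  | zero =>
    induction j with
    | zero => rw [imgB_zero_zero, sub_self]; exact zero_mem _
    | succ j ih =>
      have h : imgB F (0, j + 1, k) - e F (0, j + 1, k + 1) =
          opD F (imgB F (0, j, k) - e F (0, j, k + 1)) + Xβ F • e F (0, j, k)
            + Xδ F • imgB F (0, j, k) - (2 : P F) • opA F (imgB F (0, j, k))
            + (2 : P F) • e F (0, j + 1, k) - opB F (imgB F (0, j, k)) := by
        rw [imgB_zero_succ, map_sub, opD_e, imgD_zero]; abel
      have hb := imgB_mem_restrictWt F (0, j, k)
      rw [h]
      refine sub_mem (add_mem (sub_mem (add_mem (add_mem ?_ ?_) ?_) ?_) ?_) ?_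
      · exact opD_mem_restrictWt ih (by simp only [wt]; omega)
      · exact Submodule.smul_mem _ _ (e_mem_restrictWt (by simp only [wt]; omega))
      · exact Submodule.smul_mem _ _ (mem_restrictWt_of_le hb (by simp only [wt]; omega))
      · exact Submodule.smul_mem _ _ (opA_mem_restrictWt hb (by simp only [wt]; omega))
      · exact Submodule.smul_mem _ _ (e_mem_restrictWt (by simp only [wt]; omega))
      · exact opB_mem_restrictWt hb (by simp only [wt]; omega)
  | succ i ih =>
    have h : imgB F (i + 1, j, k) - e F (i + 1, j, k + 1) =
        opA F (imgB F (i, j, k) - e F (i, j, k + 1)) - (2 : P F) • imgD F (i, j, k) := by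
      rw [imgB_succ, map_sub, opA_e]; abel
    rw [h]
    exact sub_mem (opA_mem_restrictWt ih (by simp only [wt]; omega)) (Submodule.smul_mem _ _
      (mem_restrictWt_of_le (imgD_mem_restrictWt F _) (by simp only [wt]; omega)))

def wtLex (m : Idx) : ℕ ×ₗ (ℕ ×ₗ (ℕ ×ₗ ℕ)) := toLex (wt m, toLex (m.1, toLex (m.2.1, m.2.2)))

lemma wt_add (m n : Idx) : wt (m + n) = wt m + wt n := by
  simp only [wt, Prod.fst_add, Prod.snd_add]; ring

lemma wtLex_injective : Function.Injective wtLex := by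
  rintro ⟨a, b, c⟩ ⟨a', b', c'⟩ h
  simp_all [wtLex]

lemma wtLex_lt_iff {m m' : Idx} : wtLex m < wtLex m' ↔ wt m < wt m' ∨ (wt m = wt m' ∧
    (m.1 < m'.1 ∨ (m.1 = m'.1 ∧ (m.2.1 < m'.2.1 ∨ (m.2.1 = m'.2.1 ∧ m.2.2 < m'.2.2))))) := by
  simp [wtLex, Prod.Lex.lt_iff]

lemma wtLex_lt_of_wt_lt {m m' : Idx} (h : wt m < wt m') : wtLex m < wtLex m' :=
  wtLex_lt_iff.2 (Or.inl h)

lemma wt_le_of_wtLex_le {m m' : Idx} (h : wtLex m ≤ wtLex m') : wt m ≤ wt m' :=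
  not_lt.1 fun h' => (wtLex_lt_of_wt_lt h').not_ge h

lemma wtLex_add_lt_add {m m' : Idx} (n : Idx) (h : wtLex m < wtLex m') :
    wtLex (m + n) < wtLex (m' + n) := by
  rw [wtLex_lt_iff] at h ⊢
  simp only [wt_add, Prod.fst_add, Prod.snd_add]
  omega

lemma wtLex_add_le_add {m m' : Idx} (n : Idx) (h : wtLex m ≤ wtLex m') :
    wtLex (m + n) ≤ wtLex (m' + n) := by
  rcases h.eq_or_lt with h | h
  · rw [wtLex_injective h]
  · exact (wtLex_add_lt_add n h).le

variable {F}

def HasLead (v : V F) (p : Idx) (c : P F) : Prop := v p = c ∧ ∀ m ∈ v.support, wtLex m ≤ wtLex p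

lemma exists_hasLead {v : V F} (hv : v ≠ 0) : ∃ p, HasLead v p (v p) ∧ v p ≠ 0 := by
  obtain ⟨p, hp, hmax⟩ := v.support.exists_max_image wtLex (support_nonempty_iff.2 hv)
  exact ⟨p, ⟨rfl, hmax⟩, mem_support_iff.1 hp⟩

lemma linearCombination_eq_mapDomain_add (G : Idx → V F) (s : Idx) (v : V F) :
    linearCombination (P F) G v =
      mapDomain (· + s) v + linearCombination (P F) (fun m => G m - e F (m + s)) v := by
  induction v using induction_linear with
  | zero => simp
  | add v w hv hw => rw [map_add, map_add, mapDomain_add, hv, hw]; abel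
  | single a q => simp [mapDomain_single, e, smul_sub, smul_single]

namespace HasLead

variable {v : V F} {p : Idx} {c : P F}

lemma mem_restrictWt (h : HasLead v p c) : v ∈ restrictWt F (wt p) :=
  Racah.mem_restrictWt.2 fun m hm => wt_le_of_wtLex_le (h.2 m hm)

lemma apply_eq_zero (h : HasLead v p c) {m : Idx} (hm : wtLex p < wtLex m) : v m = 0 :=
  notMem_support_iff.1 fun hm' => (h.2 m hm').not_gt hm

lemma add_of_mem_restrictWt (h : HasLead v p c) {w : V F} {W : ℕ} (hw : w ∈ restrictWt F W)
    (hW : W < wt p) : HasLead (v + w) p c := by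
  refine ⟨by rw [Finsupp.add_apply, h.1, apply_eq_zero_of_mem_restrictWt hw hW, add_zero],
    fun m hm => ?_⟩
  rcases Finset.mem_union.1 (support_add hm) with hm | hm
  · exact h.2 m hm
  · exact (wtLex_lt_of_wt_lt ((Racah.mem_restrictWt.1 hw m hm).trans_lt hW)).le

lemma mapDomain_add_right (h : HasLead v p c) (s : Idx) :
    HasLead (mapDomain (· + s) v) (p + s) c := by
  refine ⟨by rw [mapDomain_apply (add_left_injective s), h.1], fun m hm => ?_⟩
  obtain ⟨m', hm', rfl⟩ := Finset.mem_image.1 (mapDomain_support hm)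
  exact wtLex_add_le_add s (h.2 m' hm')

lemma linearCombination (h : HasLead v p c) {G : Idx → V F} {s : Idx} {t : ℕ}
    (hG : ∀ m, G m - e F (m + s) ∈ restrictWt F (wt m + t)) (ht : t < wt s) :
    HasLead (Finsupp.linearCombination (P F) G v) (p + s) c := by
  rw [linearCombination_eq_mapDomain_add G s v]
  exact (h.mapDomain_add_right s).add_of_mem_restrictWt
    (linearCombination_mem_restrictWt hG h.mem_restrictWt le_rfl) (by rw [wt_add]; omega)

lemma opA_apply (h : HasLead v p c) : HasLead (opA F v) (p + (1, 0, 0)) c :=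
  h.linearCombination (t := 0) (fun ⟨i, j, k⟩ => by simp [e]) (by simp [wt])

lemma opD_apply (h : HasLead v p c) : HasLead (opD F v) (p + (0, 1, 0)) c :=
  h.linearCombination (fun ⟨i, j, k⟩ => by simpa using imgD_sub_e_mem F i j k) (by simp [wt])

lemma opB_apply (h : HasLead v p c) : HasLead (opB F v) (p + (0, 0, 1)) c :=
  h.linearCombination (fun ⟨i, j, k⟩ => by simpa using imgB_sub_e_mem F i j k) (by simp [wt])

lemma pow_apply {f : Module.End (P F) (V F)} {s : Idx}
    (hf : ∀ {v : V F} {p : Idx} {c : P F}, HasLead v p c → HasLead (f v) (p + s) c) (n : ℕ)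
    (h : HasLead v p c) : HasLead ((f ^ n) v) (p + n • s) c := by
  induction n with
  | zero => simpa using h
  | succ n ih => rw [pow_succ', Module.End.mul_apply, succ_nsmul, ← add_assoc]; exact hf ih

lemma rep_word_apply (h : HasLead v p c) (a : Idx) : HasLead (rep F (word F a) v) (a + p) c := by
  have h' := pow_apply opA_apply a.1 (pow_apply opD_apply a.2.1 (pow_apply opB_apply a.2.2 h))
  rw [rep_word, Module.End.mul_apply, Module.End.mul_apply]
  convert h' using 1
  obtain ⟨i, j, k⟩ := a
  simp only [Prod.ext_iff, Prod.fst_add, Prod.snd_add, Prod.smul_fst, Prod.smul_snd, smul_eq_mul]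
  omega

end HasLead

lemma rep_pbwSum_apply_add (h2 : (2 : F) ≠ 0) (x : Idx →₀ P F) {w : V F} {p b : Idx} {c : P F}
    (hw : HasLead w p c) (hb : ∀ a ∈ x.support, wtLex a ≤ wtLex b) :
    rep F (pbwSum h2 x) w (b + p) = x b * c := by
  have hterm (a : Idx) (q : P F) :
      rep F (evalCenter F h2 q * word F a) w = q • rep F (word F a) w := by
    rw [map_mul, Module.End.mul_apply, rep_evalCenter, Module.algebraMap_end_apply]
  rw [pbwSum_apply, Finsupp.sum, map_sum, LinearMap.sum_apply, finsetSum_apply]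
  simp only [hterm, Finsupp.smul_apply, smul_eq_mul]
  rw [Finset.sum_eq_single b]
  · rw [(hw.rep_word_apply b).1]
  · intro a ha hab
    rw [(hw.rep_word_apply a).apply_eq_zero
      (wtLex_add_lt_add p ((hb a ha).lt_of_ne (wtLex_injective.ne hab))), mul_zero]
  · intro hb'
    rw [notMem_support_iff.1 hb', zero_mul]

lemma rep_mul_apply_add (h2 : (2 : F) ≠ 0) {u v : R F} {b p : Idx} {cu cv : P F}
    (hu : HasLead (rep F u (e F 0)) b cu) (hv : HasLead (rep F v (e F 0)) p cv) :
    rep F (u * v) (e F 0) (b + p) = cu * cv := by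
  obtain ⟨x, rfl⟩ := pbwSum_surjective h2 u
  rw [rep_pbwSum_apply_e_zero] at hu
  rw [map_mul, Module.End.mul_apply, rep_pbwSum_apply_add h2 x hv hu.2, hu.1]

lemma rep_apply_e_zero_ne_zero (h2 : (2 : F) ≠ 0) {u : R F} (hu : u ≠ 0) : rep F u (e F 0) ≠ 0 := by
  obtain ⟨x, rfl⟩ := pbwSum_surjective h2 u
  rw [rep_pbwSum_apply_e_zero]
  rintro rfl
  exact hu (map_zero _)

end Racah

open Racah in
/-- ℜ has no zero divisors: if u, v ∈ ℜ are nonzero then uv ≠ 0. -/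
theorem stmt16 (F : Type) [Field F] (h2 : (2 : F) ≠ 0) :
    ∀ u v : Racah.R F, u ≠ 0 → v ≠ 0 → u * v ≠ 0 := by
  intro u v hu hv huv
  obtain ⟨b, hb, hb0⟩ := exists_hasLead (rep_apply_e_zero_ne_zero h2 hu)
  obtain ⟨p, hp, hp0⟩ := exists_hasLead (rep_apply_e_zero_ne_zero h2 hv)
  have h := rep_mul_apply_add h2 hb hp
  rw [huv, map_zero, LinearMap.zero_apply, Finsupp.coe_zero, Pi.zero_apply] at h
  exact mul_ne_zero hb0 hp0 h.symm
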